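/- Let p be a d×d matrix-valued trigonometric polynomial satisfying p(θ)^H p(θ) + p(θ+π)^H p(θ+π) > 0 for all θ ∈ [0,2π). Then for n = 2k the matrix (pₙᵏ)^H pₙᵏ = 𝒜_k(p̂) with p̂(θ) = ½( p(θ/2)^H p(θ/2) + p(θ/2+π)^H p(θ/2+π) ) is Hermitian positive definite, hence invertible. -/

import Mathlib

open Matrix
open scoped ComplexOrder Kronecker

/-- The (unitary) Fourier matrix `Fₙ` with entries `n^{-1/2} e^{-ι j θ_i^{(n)}}`,
`θ_i^{(n)} = 2πi/n`. -/
noncomputable def Fmat (n : ℕ) : Matrix (Fin n) (Fin n) ℂ :=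
  Matrix.of fun i j =>
    ((Real.sqrt n : ℝ) : ℂ)⁻¹ *
      Complex.exp (-Complex.I * ((j : ℕ) : ℂ) *
        ((2 * Real.pi * (i : ℕ) / n : ℝ) : ℂ))

/-- Block-diagonal matrix of the samples `g(θ_i^{(n)})`, `θ_i^{(n)} = 2πi/n`. -/
noncomputable def sampDiag (n d : ℕ) (g : ℝ → Matrix (Fin d) (Fin d) ℂ) :
    Matrix (Fin n × Fin d) (Fin n × Fin d) ℂ :=
  Matrix.of fun p q =>
    if p.1 = q.1 then g (2 * Real.pi * (p.1 : ℕ) / n) p.2 q.2 else 0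

/-- The block-circulant matrix `𝒜ₙ(g) = (Fₙ ⊗ I_d) diag_i(g(θ_i^{(n)})) (Fₙᴴ ⊗ I_d)`. -/
noncomputable def blockCirc (n d : ℕ) (g : ℝ → Matrix (Fin d) (Fin d) ℂ) :
    Matrix (Fin n × Fin d) (Fin n × Fin d) ℂ :=
  (Fmat n ⊗ₖ (1 : Matrix (Fin d) (Fin d) ℂ)) * sampDiag n d g *
    ((Fmat n)ᴴ ⊗ₖ (1 : Matrix (Fin d) (Fin d) ℂ))

/-- The cutting matrix `Kₙ` (with `n = 2k`) selecting the even-indexed entries. -/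
def cutK (k : ℕ) : Matrix (Fin k) (Fin (2 * k)) ℂ :=
  Matrix.of fun i j => if (j : ℕ) = 2 * (i : ℕ) then 1 else 0

/-! The Fourier matrix `Fₙ` is unitary, so `𝒜ₙ(g) = (Fₙ ⊗ I) diag(g(θᵢ)) (Fₙ ⊗ I)ᴴ` is
multiplicative and `𝒜ₙ(p)ᴴ 𝒜ₙ(p) = 𝒜ₙ(pᴴp)`. For `n = 2k` the rows of `Kₙ Fₙ` are the rows
of `F_k`, repeated on both halves `j = b` and `j = b + k` and scaled by `1/√2`, while the fine
grid point `θ_{b+ak}^{(n)}` is `θ_b^{(k)}/2 + aπ`. Hence `(Kₙ ⊗ I) 𝒜ₙ(f) (Kₙᵀ ⊗ I) = 𝒜_k(f̂)`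
with `f̂(θ) = ½(f(θ/2) + f(θ/2 + π))`. For `f = pᴴp` we get `f̂ = p̂`, which is positive definite
at every grid point, and so `𝒜_k(p̂)` is positive definite.
-/

noncomputable def fourierRoot (n : ℕ) : ℂ := Complex.exp (-(2 * Real.pi * Complex.I / n))

lemma isPrimitiveRoot_fourierRoot {n : ℕ} (hn : n ≠ 0) :
    IsPrimitiveRoot (fourierRoot n) n := by
  simpa [fourierRoot, Complex.exp_neg] using (Complex.isPrimitiveRoot_exp n hn).inv

lemma fourierRoot_two_mul_pow_two (k : ℕ) : fourierRoot (2 * k) ^ 2 = fourierRoot k := by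
  rw [fourierRoot, fourierRoot, ← Complex.exp_nat_mul]
  push_cast
  ring_nf

lemma star_fourierRoot (n : ℕ) : star (fourierRoot n) = (fourierRoot n)⁻¹ := by
  rw [fourierRoot, Complex.star_def, ← Complex.exp_conj, ← Complex.exp_neg]
  simp [map_div₀, map_ofNat, neg_div]

lemma Fmat_apply {n : ℕ} (i j : Fin n) :
    Fmat n i j = ((√n : ℝ) : ℂ)⁻¹ * fourierRoot n ^ ((i : ℕ) * j) := by
  rw [Fmat, of_apply, fourierRoot, ← Complex.exp_nat_mul]
  push_cast
  ring_nf

lemma Fin.sum_pow_eq_ite_of_pow_eq_one {K : Type*} [Field K] [DecidableEq K] {n : ℕ} {z : K}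
    (hz : z ^ n = 1) : ∑ i : Fin n, z ^ (i : ℕ) = if z = 1 then (n : K) else 0 := by
  rw [Fin.sum_univ_eq_sum_range (z ^ ·)]
  split_ifs with h
  · simp [h]
  · rw [geom_sum_eq h, hz, sub_self, zero_div]

lemma ofReal_inv_sqrt_mul_self {x : ℝ} (hx : 0 ≤ x) :
    ((√x : ℝ) : ℂ)⁻¹ * ((√x : ℝ) : ℂ)⁻¹ = ((x : ℝ) : ℂ)⁻¹ := by
  rw [← mul_inv, ← Complex.ofReal_mul, Real.mul_self_sqrt hx]

lemma Fmat_conjTranspose_mul_self (n : ℕ) : (Fmat n)ᴴ * Fmat n = 1 := by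
  ext a b
  have hn : n ≠ 0 := a.pos.ne'
  have hζ := isPrimitiveRoot_fourierRoot hn
  set ζ := fourierRoot n
  have hterm : ∀ i : Fin n, star (Fmat n i a) * Fmat n i b
      = (n : ℂ)⁻¹ * ((ζ ^ (a : ℕ))⁻¹ * ζ ^ (b : ℕ)) ^ (i : ℕ) := by
    intro i
    rw [Fmat_apply, Fmat_apply, star_mul', star_pow, star_fourierRoot, star_inv₀,
      Complex.star_def, Complex.conj_ofReal, mul_mul_mul_comm,
      ofReal_inv_sqrt_mul_self n.cast_nonneg, mul_pow, inv_pow, inv_pow, ← pow_mul, ← pow_mul,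
      mul_comm (a : ℕ), mul_comm (b : ℕ)]
    push_cast; rfl
  have hsum : ∑ i : Fin n, ((ζ ^ (a : ℕ))⁻¹ * ζ ^ (b : ℕ)) ^ (i : ℕ)
      = if a = b then (n : ℂ) else 0 := by
    rw [Fin.sum_pow_eq_ite_of_pow_eq_one]
    · have hab : ζ ^ (a : ℕ) = ζ ^ (b : ℕ) ↔ a = b :=
        ⟨fun h => Fin.ext (hζ.pow_inj a.2 b.2 h), by rintro rfl; rfl⟩
      simp [inv_mul_eq_one₀ (pow_ne_zero _ (hζ.ne_zero hn)), hab]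
    · rw [mul_pow, inv_pow, ← pow_mul, ← pow_mul, mul_comm _ n, mul_comm _ n, pow_mul, pow_mul,
        hζ.pow_eq_one]
      simp
  simp only [mul_apply, conjTranspose_apply, hterm, ← Finset.mul_sum, hsum, one_apply]
  split_ifs <;> simp [hn]

lemma sampDiag_conjTranspose {n d : ℕ} (g : ℝ → Matrix (Fin d) (Fin d) ℂ) :
    (sampDiag n d g)ᴴ = sampDiag n d fun θ => (g θ)ᴴ := by
  ext x y
  by_cases h : x.1 = y.1
  · simp [sampDiag, h]
  · simp [sampDiag, h, Ne.symm h]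

lemma sampDiag_mul {n d : ℕ} (g h : ℝ → Matrix (Fin d) (Fin d) ℂ) :
    sampDiag n d g * sampDiag n d h = sampDiag n d fun θ => g θ * h θ := by
  ext x y
  simp only [mul_apply, sampDiag, of_apply, Fintype.sum_prod_type, ite_mul, zero_mul, mul_ite,
    mul_zero]
  by_cases hxy : x.1 = y.1
  · simp [hxy, Finset.sum_ite_eq']
  · simp [hxy]

lemma posDef_sampDiag {n d : ℕ} {g : ℝ → Matrix (Fin d) (Fin d) ℂ}
    (hg : ∀ i : Fin n, (g (2 * Real.pi * (i : ℕ) / n)).PosDef) : (sampDiag n d g).PosDef := by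
  refine PosDef.of_dotProduct_mulVec_pos ?_ fun x hx => ?_
  · ext x y
    by_cases h : x.1 = y.1
    · rw [conjTranspose_apply]
      simp only [sampDiag, of_apply, if_pos h.symm, if_pos h]
      rw [h, ← conjTranspose_apply, (hg y.1).1.eq]
    · simp [sampDiag, h, Ne.symm h]
  · have hblocks : star x ⬝ᵥ sampDiag n d g *ᵥ x = ∑ i : Fin n,
        star (fun a => x (i, a)) ⬝ᵥ g (2 * Real.pi * (i : ℕ) / n) *ᵥ fun a => x (i, a) := by
      simp [dotProduct, mulVec, sampDiag, Fintype.sum_prod_type, Finset.mul_sum]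
    obtain ⟨⟨i₀, a₀⟩, hx₀⟩ := Function.ne_iff.mp hx
    rw [hblocks]
    exact Finset.sum_pos' (fun i _ => (hg i).posSemidef.dotProduct_mulVec_nonneg _)
      ⟨i₀, Finset.mem_univ _,
        (hg i₀).dotProduct_mulVec_pos fun h => hx₀ (congrFun h a₀)⟩

lemma blockCirc_conjTranspose_mul_self {n d : ℕ} (g : ℝ → Matrix (Fin d) (Fin d) ℂ) :
    (blockCirc n d g)ᴴ * blockCirc n d g = blockCirc n d fun θ => (g θ)ᴴ * g θ := by
  have hF : ((Fmat n)ᴴ ⊗ₖ (1 : Matrix (Fin d) (Fin d) ℂ)) * (Fmat n ⊗ₖ 1) = 1 := by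
    rw [← mul_kronecker_mul, Fmat_conjTranspose_mul_self, one_mul, one_kronecker_one]
  simp only [blockCirc, conjTranspose_mul, conjTranspose_kronecker, conjTranspose_one,
    conjTranspose_conjTranspose, mul_assoc]
  rw [← mul_assoc ((Fmat n)ᴴ ⊗ₖ 1), hF, one_mul, ← mul_assoc (sampDiag n d g)ᴴ,
    sampDiag_conjTranspose, sampDiag_mul]

lemma posDef_blockCirc {n d : ℕ} {g : ℝ → Matrix (Fin d) (Fin d) ℂ}
    (hg : ∀ i : Fin n, (g (2 * Real.pi * (i : ℕ) / n)).PosDef) : (blockCirc n d g).PosDef := by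
  have hU : Fmat n ⊗ₖ (1 : Matrix (Fin d) (Fin d) ℂ) ∈ unitary _ :=
    kronecker_mem_unitary (mem_unitaryGroup_iff'.mpr (Fmat_conjTranspose_mul_self n)) (one_mem _)
  have := (posDef_sampDiag hg (d := d)).mul_mul_conjTranspose_same
    (vecMul_injective_of_isUnit (Unitary.isUnit_coe (U := ⟨_, hU⟩)))
  simpa [blockCirc, conjTranspose_kronecker] using this

lemma mul_kronecker_one {l m n p : Type*} [Fintype m] [DecidableEq p] [Fintype p]
    (A : Matrix l m ℂ) (B : Matrix m n ℂ) :
    (A * B) ⊗ₖ (1 : Matrix p p ℂ)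
      = (A ⊗ₖ (1 : Matrix p p ℂ)) * (B ⊗ₖ (1 : Matrix p p ℂ)) := by
  rw [← mul_kronecker_mul, mul_one]

lemma kronecker_one_mul_sampDiag_mul_apply {m n d : ℕ} (G : Matrix (Fin m) (Fin n) ℂ)
    (g : ℝ → Matrix (Fin d) (Fin d) ℂ) (x y : Fin m × Fin d) :
    ((G ⊗ₖ (1 : Matrix (Fin d) (Fin d) ℂ)) * sampDiag n d g *
      (Gᴴ ⊗ₖ (1 : Matrix (Fin d) (Fin d) ℂ))) x y
      = ∑ j : Fin n, G x.1 j * g (2 * Real.pi * (j : ℕ) / n) x.2 y.2 * star (G y.1 j) := by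
  simp only [mul_apply, Fintype.sum_prod_type, kroneckerMap_apply, one_apply,
    conjTranspose_apply, sampDiag, of_apply]
  simp [mul_comm, mul_left_comm]

lemma cutK_transpose_eq_conjTranspose (k : ℕ) : (cutK k)ᵀ = (cutK k)ᴴ := by
  ext i j
  simp [cutK, apply_ite (star ·)]

lemma cutK_mul_apply {k : ℕ} {α : Type*} (M : Matrix (Fin (2 * k)) α ℂ) (i : Fin k) (j : α) :
    (cutK k * M) i j = M ⟨2 * i, by omega⟩ j := by
  rw [mul_apply, Finset.sum_eq_single ⟨2 * i, by omega⟩]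
  · simp [cutK]
  · intro l _ hl
    rw [cutK, of_apply, if_neg fun h => hl (Fin.ext h), zero_mul]
  · simp

lemma cutK_mul_Fmat_apply {k : ℕ} (i : Fin k) (a : Fin 2) (b : Fin k) :
    (cutK k * Fmat (2 * k)) i (finProdFinEquiv (a, b))
      = ((√2 : ℝ) : ℂ)⁻¹ * Fmat k i b := by
  have hroot : fourierRoot (2 * k) ^ (2 * (i : ℕ) * (b + k * a))
      = fourierRoot k ^ ((i : ℕ) * b) := by
    rw [show 2 * (i : ℕ) * (b + k * a) = 2 * (i * b + k * (i * a)) by ring,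
      pow_mul (fourierRoot (2 * k)) 2, fourierRoot_two_mul_pow_two, pow_add,
      pow_mul (fourierRoot k) k, (isPrimitiveRoot_fourierRoot i.pos.ne').pow_eq_one, one_pow,
      mul_one]
  rw [cutK_mul_apply, Fmat_apply, Fmat_apply, finProdFinEquiv_apply_val, hroot, Nat.cast_mul,
    Nat.cast_ofNat, Real.sqrt_mul zero_le_two, Complex.ofReal_mul, mul_inv, mul_assoc]

lemma two_mul_pi_mul_finProdFinEquiv_div {k : ℕ} (hk : k ≠ 0) (a : Fin 2) (b : Fin k) :
    2 * Real.pi * ((finProdFinEquiv (a, b) : Fin (2 * k)) : ℕ) / (2 * k : ℕ)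
      = 2 * Real.pi * (b : ℕ) / k / 2 + (a : ℕ) * Real.pi := by
  simp only [finProdFinEquiv_apply_val]
  push_cast
  field_simp

theorem cutK_kronecker_mul_blockCirc_mul {k d : ℕ} (f : ℝ → Matrix (Fin d) (Fin d) ℂ) :
    (cutK k ⊗ₖ (1 : Matrix (Fin d) (Fin d) ℂ)) * blockCirc (2 * k) d f *
        ((cutK k)ᵀ ⊗ₖ (1 : Matrix (Fin d) (Fin d) ℂ))
      = blockCirc k d fun θ => (1 / 2 : ℂ) • (f (θ / 2) + f (θ / 2 + Real.pi)) := by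
  have hG : (cutK k ⊗ₖ (1 : Matrix (Fin d) (Fin d) ℂ)) * blockCirc (2 * k) d f *
        ((cutK k)ᵀ ⊗ₖ (1 : Matrix (Fin d) (Fin d) ℂ))
      = ((cutK k * Fmat (2 * k)) ⊗ₖ (1 : Matrix (Fin d) (Fin d) ℂ)) * sampDiag (2 * k) d f
        * ((cutK k * Fmat (2 * k))ᴴ ⊗ₖ (1 : Matrix (Fin d) (Fin d) ℂ)) := by
    rw [blockCirc, cutK_transpose_eq_conjTranspose, conjTranspose_mul, mul_kronecker_one,
      mul_kronecker_one]
    simp only [Matrix.mul_assoc]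
  rw [hG, blockCirc]
  refine Matrix.ext fun ⟨i, a⟩ ⟨i', b⟩ => ?_
  have hk : k ≠ 0 := i.pos.ne'
  rw [kronecker_one_mul_sampDiag_mul_apply, kronecker_one_mul_sampDiag_mul_apply,
    ← finProdFinEquiv.sum_comp, Fintype.sum_prod_type, Finset.sum_comm]
  refine Finset.sum_congr rfl fun m _ => ?_
  simp only [Fin.sum_univ_two, cutK_mul_Fmat_apply, two_mul_pi_mul_finProdFinEquiv_div hk,
    star_mul', star_inv₀, Complex.star_def, Complex.conj_ofReal, Matrix.smul_apply,
    Matrix.add_apply, smul_eq_mul, Fin.val_zero, Fin.val_one, Nat.cast_zero, Nat.cast_one,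
    zero_mul, add_zero, one_mul]
  have hhalf := ofReal_inv_sqrt_mul_self (zero_le_two : (0 : ℝ) ≤ 2)
  push_cast at hhalf
  linear_combination (Fmat k i m * (f (2 * Real.pi * m / k / 2) a b
    + f (2 * Real.pi * m / k / 2 + Real.pi) a b) * (starRingEnd ℂ) (Fmat k i' m)) * hhalf

theorem stmt_13_general {d k : ℕ}
    (p : ℝ → Matrix (Fin d) (Fin d) ℂ)
    (hpos : ∀ θ : ℝ,
      ((p θ)ᴴ * p θ + (p (θ + Real.pi))ᴴ * p (θ + Real.pi)).PosDef)
    (phat : ℝ → Matrix (Fin d) (Fin d) ℂ)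
    (hphat : ∀ θ : ℝ, phat θ = (1 / 2 : ℂ) •
      ((p (θ / 2))ᴴ * p (θ / 2) +
        (p (θ / 2 + Real.pi))ᴴ * p (θ / 2 + Real.pi)))
    (P : Matrix (Fin (2 * k) × Fin d) (Fin k × Fin d) ℂ)
    (hP : P = blockCirc (2 * k) d p *
      ((cutK k)ᵀ ⊗ₖ (1 : Matrix (Fin d) (Fin d) ℂ))) :
    Pᴴ * P = blockCirc k d phat ∧ (Pᴴ * P).PosDef ∧ IsUnit (Pᴴ * P) := by
  have hcoarse : Pᴴ * P = blockCirc k d phat := by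
    rw [funext hphat, ← cutK_kronecker_mul_blockCirc_mul fun θ => (p θ)ᴴ * p θ, hP,
      conjTranspose_mul, ← blockCirc_conjTranspose_mul_self, conjTranspose_kronecker,
      conjTranspose_one, cutK_transpose_eq_conjTranspose, conjTranspose_conjTranspose]
    simp only [Matrix.mul_assoc]
  have hposDef : (blockCirc k d phat).PosDef :=
    posDef_blockCirc fun i => hphat _ ▸ (hpos _).smul (by norm_num)
  exact ⟨hcoarse, hcoarse ▸ hposDef, hcoarse ▸ hposDef.isUnit⟩

/-- if `p(θ)ᴴp(θ) + p(θ+π)ᴴp(θ+π) > 0` for all `θ`, then for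
`n = 2k` the matrix `(pₙᵏ)ᴴ pₙᵏ = 𝒜_k(p̂)` with
`p̂(θ) = ½(p(θ/2)ᴴp(θ/2) + p(θ/2+π)ᴴp(θ/2+π))` is Hermitian positive definite,
hence invertible. -/
theorem stmt_13 {d k : ℕ} (hk : 0 < k)
    (p : ℝ → Matrix (Fin d) (Fin d) ℂ)
    (hpos : ∀ θ : ℝ,
      ((p θ)ᴴ * p θ + (p (θ + Real.pi))ᴴ * p (θ + Real.pi)).PosDef)
    (phat : ℝ → Matrix (Fin d) (Fin d) ℂ)
    (hphat : ∀ θ : ℝ, phat θ = (1 / 2 : ℂ) •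
      ((p (θ / 2))ᴴ * p (θ / 2) +
        (p (θ / 2 + Real.pi))ᴴ * p (θ / 2 + Real.pi)))
    (P : Matrix (Fin (2 * k) × Fin d) (Fin k × Fin d) ℂ)
    (hP : P = blockCirc (2 * k) d p *
      ((cutK k)ᵀ ⊗ₖ (1 : Matrix (Fin d) (Fin d) ℂ))) :
    Pᴴ * P = blockCirc k d phat ∧ (Pᴴ * P).PosDef ∧ IsUnit (Pᴴ * P) :=
  stmt_13_general p hpos phat hphat P hP
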